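/- Improved lower bound far from the critical angular momenta (Remark 4.7): Let ω ∈ (0,π) and let k ∈ ℤ with k ≤ −2 or k ≥ 1 (equivalently |k + 1/2| ≥ 3/2). Then for every ψ ∈ M one has ‖(T_k − 1/2)ψ‖²_{L²((0,ω);ℂ⁴)} ≥ (3/4) · ‖ψ‖²_{L²((0,ω);ℂ⁴)}. -/

import Mathlib

open MeasureTheory Real Set

noncomputable section

/-- First component of the fiber differential expression `τ_k` applied to a pair `(f,g)`:
`(k+1) f − g' − (k+1/2) cot θ · g`. -/
def tauFst (k : ℤ) (f g : ℝ → ℂ) (θ : ℝ) : ℂ :=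
  ((k : ℂ) + 1) * f θ - deriv g θ
    - ((k : ℂ) + 1 / 2) * ((Real.cos θ / Real.sin θ : ℝ) : ℂ) * g θ

/-- Second component of the fiber differential expression `τ_k` applied to a pair `(f,g)`:
`f' − (k+1/2) cot θ · f − k g`. -/
def tauSnd (k : ℤ) (f g : ℝ → ℂ) (θ : ℝ) : ℂ :=
  deriv f θ - ((k : ℂ) + 1 / 2) * ((Real.cos θ / Real.sin θ : ℝ) : ℂ) * f θ
    - (k : ℂ) * g θ

/-- The core `M` of the fiber operator `T_k`: smooth `ℂ⁴`-valued functions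
`ψ = (ψ₁,ψ₂,ψ₃,ψ₄)` on `(0,ω]` with compact support in `(0,ω]` satisfying the boundary
condition `(ψ₁(ω), ψ₂(ω))ᵀ = A_ω (ψ₃(ω), ψ₄(ω))ᵀ` with
`A_ω = [[i sin ω, −i cos ω], [−i cos ω, −i sin ω]]`. -/
def InCore (ω : ℝ) (ψ₁ ψ₂ ψ₃ ψ₄ : ℝ → ℂ) : Prop :=
  ContDiffOn ℝ (⊤ : ℕ∞) ψ₁ (Ioc 0 ω) ∧ ContDiffOn ℝ (⊤ : ℕ∞) ψ₂ (Ioc 0 ω)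
    ∧ ContDiffOn ℝ (⊤ : ℕ∞) ψ₃ (Ioc 0 ω) ∧ ContDiffOn ℝ (⊤ : ℕ∞) ψ₄ (Ioc 0 ω)
    ∧ IsCompact (tsupport ψ₁) ∧ tsupport ψ₁ ⊆ Ioc 0 ω
    ∧ IsCompact (tsupport ψ₂) ∧ tsupport ψ₂ ⊆ Ioc 0 ω
    ∧ IsCompact (tsupport ψ₃) ∧ tsupport ψ₃ ⊆ Ioc 0 ω
    ∧ IsCompact (tsupport ψ₄) ∧ tsupport ψ₄ ⊆ Ioc 0 ω
    ∧ ψ₁ ω = Complex.I * (Real.sin ω : ℂ) * ψ₃ ω - Complex.I * (Real.cos ω : ℂ) * ψ₄ ω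
    ∧ ψ₂ ω = -Complex.I * (Real.cos ω : ℂ) * ψ₃ ω - Complex.I * (Real.sin ω : ℂ) * ψ₄ ω

def cotA (t : ℝ) : ℝ := Real.cos t / Real.sin t

def bilinA (x y : ℂ) : ℝ := x.re * y.re + x.im * y.im

lemma norm_sq_complexA (z : ℂ) : ‖z‖^2 = z.re^2 + z.im^2 := by
  rw [Complex.sq_norm, Complex.normSq_apply]; ring

lemma hasDerivAt_cotA {x : ℝ} (hx : Real.sin x ≠ 0) :
    HasDerivAt cotA (-(1 + cotA x ^ 2)) x := by
  have h := (Real.hasDerivAt_cos x).div (Real.hasDerivAt_sin x) hx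
  refine h.congr_deriv ?_
  unfold cotA
  field_simp
  ring

lemma hasDerivAt_re_comp {f : ℝ → ℂ} {df : ℂ} {x : ℝ} (hf : HasDerivAt f df x) :
    HasDerivAt (fun t => (f t).re) df.re x := by
  exact (Complex.reCLM.hasFDerivAt.comp_hasDerivAt x hf)

lemma hasDerivAt_im_comp {f : ℝ → ℂ} {df : ℂ} {x : ℝ} (hf : HasDerivAt f df x) :
    HasDerivAt (fun t => (f t).im) df.im x := by
  exact (Complex.imCLM.hasFDerivAt.comp_hasDerivAt x hf)

lemma hasDerivAt_bilinA {f g : ℝ → ℂ} {df dg : ℂ} {x : ℝ}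
    (hf : HasDerivAt f df x) (hg : HasDerivAt g dg x) :
    HasDerivAt (fun t => bilinA (f t) (g t)) (bilinA df (g x) + bilinA (f x) dg) x := by
  have h := ((hasDerivAt_re_comp hf).mul (hasDerivAt_re_comp hg)).add
    ((hasDerivAt_im_comp hf).mul (hasDerivAt_im_comp hg))
  refine h.congr_deriv ?_
  unfold bilinA; ring

def pairPhi (k : ℤ) (f g : ℝ → ℂ) (t : ℝ) : ℝ :=
  ‖tauFst k f g t - (1/2) * f t‖^2 + ‖tauSnd k f g t - (1/2) * g t‖^2

def pairN (f g : ℝ → ℂ) (t : ℝ) : ℝ := ‖f t‖^2 + ‖g t‖^2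

def pairV (K : ℝ) (f g : ℝ → ℂ) (t : ℝ) : ℝ :=
  K * (cotA t * (bilinA (g t) (g t) - bilinA (f t) (f t)) - 2 * bilinA (f t) (g t))

def pairv (K : ℝ) (f g : ℝ → ℂ) (t : ℝ) : ℝ :=
  K * ((-(1 + cotA t ^ 2)) * (bilinA (g t) (g t) - bilinA (f t) (f t))
    + cotA t * (2 * bilinA (g t) (deriv g t) - 2 * bilinA (f t) (deriv f t))
    - 2 * (bilinA (deriv f t) (g t) + bilinA (f t) (deriv g t)))

lemma hasDerivAt_pairV {K : ℝ} {f g : ℝ → ℂ} {x : ℝ} (hx : Real.sin x ≠ 0)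
    (hf : HasDerivAt f (deriv f x) x) (hg : HasDerivAt g (deriv g x) x) :
    HasDerivAt (pairV K f g) (pairv K f g x) x := by
  have h := ((((hasDerivAt_cotA hx).mul
      ((hasDerivAt_bilinA hg hg).sub (hasDerivAt_bilinA hf hf))).sub
      ((hasDerivAt_bilinA hf hg).const_mul 2)).const_mul K)
  refine h.congr_deriv ?_
  unfold pairv bilinA cotA
  simp only [Pi.sub_apply]
  ring

lemma pointwise_ineq (k : ℤ) (K : ℝ) (hKk : (k:ℝ) + 1/2 = K)
    (hK1 : 3/4 ≤ K^2 - K) (hK2 : 3/4 ≤ K^2 + K)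
    (f g : ℝ → ℂ) (θ : ℝ) :
    (3/4) * pairN f g θ + pairv K f g θ ≤ pairPhi k f g θ := by
  have e1 : tauFst k f g θ - (1/2) * f θ
      = ((K:ℝ):ℂ) * f θ - deriv g θ - ((K * cotA θ : ℝ):ℂ) * g θ := by
    unfold tauFst cotA
    push_cast [← hKk]
    ring
  have e2 : tauSnd k f g θ - (1/2) * g θ
      = deriv f θ - ((K * cotA θ : ℝ):ℂ) * f θ - ((K:ℝ):ℂ) * g θ := by
    unfold tauSnd cotA
    push_cast [← hKk]
    ring
  rw [pairPhi, pairN, e1, e2, norm_sq_complexA, norm_sq_complexA,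
    norm_sq_complexA, norm_sq_complexA]
  unfold pairv bilinA
  simp only [Complex.sub_re, Complex.sub_im, Complex.mul_re, Complex.mul_im,
    Complex.ofReal_re, Complex.ofReal_im]
  set w := cotA θ
  set fr := (f θ).re; set fi := (f θ).im; set gr := (g θ).re; set gi := (g θ).im
  set dfr := (deriv f θ).re; set dfi := (deriv f θ).im
  set dgr := (deriv g θ).re; set dgi := (deriv g θ).im
  have h1 : (0:ℝ) ≤ K^2 - K - 3/4 := by linarith
  have h2 : (0:ℝ) ≤ K^2 + K - 3/4 := by linarith
  have h3 : (0:ℝ) ≤ K^2 - K := by linarith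
  have h4 : (0:ℝ) ≤ K^2 + K := by linarith
  nlinarith [sq_nonneg dfr, sq_nonneg dfi, sq_nonneg dgr, sq_nonneg dgi,
    mul_nonneg h1 (sq_nonneg fr), mul_nonneg h1 (sq_nonneg fi),
    mul_nonneg h2 (sq_nonneg gr), mul_nonneg h2 (sq_nonneg gi),
    mul_nonneg h3 (sq_nonneg (w*fr)), mul_nonneg h3 (sq_nonneg (w*fi)),
    mul_nonneg h4 (sq_nonneg (w*gr)), mul_nonneg h4 (sq_nonneg (w*gi))]

lemma eps_of_tsupport {ω : ℝ} {f : ℝ → ℂ} (hfs : tsupport f ⊆ Ioc 0 ω) :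
    ∃ ε > 0, ∀ x < ε, f x = 0 := by
  have h0 : (0:ℝ) ∈ (tsupport f)ᶜ := by
    intro h
    exact absurd (hfs h).1 (lt_irrefl 0)
  obtain ⟨ε, hε, hball⟩ := Metric.isOpen_iff.mp (isClosed_tsupport f).isOpen_compl 0 h0
  refine ⟨ε, hε, fun x hx => ?_⟩
  rcases le_or_gt x 0 with h | h
  · by_contra hne
    have := hfs (subset_tsupport f (by simpa using hne))
    exact absurd this.1 (not_lt.mpr h)
  · have : x ∈ Metric.ball (0:ℝ) ε := by
      simp [Real.dist_eq, abs_of_pos h, hx]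
    exact image_eq_zero_of_notMem_tsupport (hball this)

lemma integrableOn_aux {ω ε : ℝ} (hε : 0 < ε) (hεω : ε ≤ ω) {h : ℝ → ℝ}
    (hc : ContinuousOn h (Ioc 0 ω)) (h0 : ∀ x ∈ Ioo 0 ε, h x = 0) :
    IntegrableOn h (Ioo 0 ω) := by
  have h1 : IntegrableOn h (Ioo 0 ε) := by
    rw [integrableOn_congr_fun h0 measurableSet_Ioo]
    exact integrableOn_zero
  have h2 : IntegrableOn h (Icc ε ω) :=
    (hc.mono (fun x hx => ⟨lt_of_lt_of_le hε hx.1, hx.2⟩)).integrableOn_compact isCompact_Icc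
  refine (h1.union h2).mono_set (fun x hx => ?_)
  rcases lt_or_ge x ε with hlt | hle
  · exact Or.inl ⟨hx.1, hlt⟩
  · exact Or.inr ⟨hle, hx.2.le⟩

lemma contOn_Icc_aux {ω ε : ℝ} (hε : 0 < ε) {h : ℝ → ℝ}
    (hc : ContinuousOn h (Ioc 0 ω)) (h0 : ∀ x < ε, h x = 0) :
    ContinuousOn h (Icc 0 ω) := by
  intro x hx
  rcases eq_or_lt_of_le hx.1 with h0x | h0x
  · subst h0x
    have heq : h =ᶠ[nhds (0:ℝ)] (fun _ => (0:ℝ)) := by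
      filter_upwards [Iio_mem_nhds hε] with y hy using h0 y hy
    have hcont : ContinuousAt h 0 :=
      ContinuousAt.congr (continuousAt_const) heq.symm
    exact hcont.continuousWithinAt
  · refine (hc.continuousWithinAt ⟨h0x, hx.2⟩).mono_of_mem_nhdsWithin ?_
    have : Icc 0 ω ∩ Ioi 0 ∈ nhdsWithin x (Icc 0 ω) :=
      inter_mem_nhdsWithin _ (Ioi_mem_nhds h0x)
    refine Filter.mem_of_superset this (fun y hy => ⟨hy.2, hy.1.2⟩)

def pairPhiW (K : ℝ) (f g D E : ℝ → ℂ) (t : ℝ) : ℝ :=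
  (K*(f t).re - (E t).re - K*cotA t*(g t).re)^2
  + (K*(f t).im - (E t).im - K*cotA t*(g t).im)^2
  + ((D t).re - K*cotA t*(f t).re - K*(g t).re)^2
  + ((D t).im - K*cotA t*(f t).im - K*(g t).im)^2

def pairvW (K : ℝ) (f g D E : ℝ → ℂ) (t : ℝ) : ℝ :=
  K * ((-(1 + cotA t ^ 2)) * (bilinA (g t) (g t) - bilinA (f t) (f t))
    + cotA t * (2 * bilinA (g t) (E t) - 2 * bilinA (f t) (D t))
    - 2 * (bilinA (D t) (g t) + bilinA (f t) (E t)))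

lemma pairv_eq_W (K : ℝ) (f g : ℝ → ℂ) :
    pairv K f g = pairvW K f g (deriv f) (deriv g) := rfl

lemma pairPhi_eq (k : ℤ) (K : ℝ) (hKk : (k:ℝ) + 1/2 = K) (f g : ℝ → ℂ) (t : ℝ) :
    pairPhi k f g t = pairPhiW K f g (deriv f) (deriv g) t := by
  have e1 : tauFst k f g t - (1/2) * f t
      = ((K:ℝ):ℂ) * f t - deriv g t - ((K * cotA t : ℝ):ℂ) * g t := by
    unfold tauFst cotA; push_cast [← hKk]; ring
  have e2 : tauSnd k f g t - (1/2) * g t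
      = deriv f t - ((K * cotA t : ℝ):ℂ) * f t - ((K:ℝ):ℂ) * g t := by
    unfold tauSnd cotA; push_cast [← hKk]; ring
  rw [pairPhi, e1, e2, norm_sq_complexA, norm_sq_complexA]
  unfold pairPhiW
  simp only [Complex.sub_re, Complex.sub_im, Complex.mul_re, Complex.mul_im,
    Complex.ofReal_re, Complex.ofReal_im]
  ring

lemma contOn_comp_re {s : Set ℝ} {f : ℝ → ℂ} (hf : ContinuousOn f s) :
    ContinuousOn (fun t => (f t).re) s := Complex.continuous_re.comp_continuousOn hf

lemma contOn_comp_im {s : Set ℝ} {f : ℝ → ℂ} (hf : ContinuousOn f s) :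
    ContinuousOn (fun t => (f t).im) s := Complex.continuous_im.comp_continuousOn hf

lemma contOn_bilin {s : Set ℝ} {f g : ℝ → ℂ} (hf : ContinuousOn f s) (hg : ContinuousOn g s) :
    ContinuousOn (fun t => bilinA (f t) (g t)) s :=
  ((contOn_comp_re hf).mul (contOn_comp_re hg)).add ((contOn_comp_im hf).mul (contOn_comp_im hg))

lemma contOn_pairPhiW {ω K : ℝ} (hωπ : ω < π) {f g D E : ℝ → ℂ}
    (hfc : ContinuousOn f (Ioc 0 ω)) (hgc : ContinuousOn g (Ioc 0 ω))
    (hDc : ContinuousOn D (Ioc 0 ω)) (hEc : ContinuousOn E (Ioc 0 ω)) :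
    ContinuousOn (pairPhiW K f g D E) (Ioc 0 ω) := by
  have hcot : ContinuousOn cotA (Ioc 0 ω) :=
    Real.continuous_cos.continuousOn.div Real.continuous_sin.continuousOn
      (fun t ht => (Real.sin_pos_of_pos_of_lt_pi ht.1 (lt_of_le_of_lt ht.2 hωπ)).ne')
  unfold pairPhiW
  apply ContinuousOn.add
  apply ContinuousOn.add
  apply ContinuousOn.add
  · exact (((continuousOn_const.mul (contOn_comp_re hfc)).sub (contOn_comp_re hEc)).sub
      ((continuousOn_const.mul hcot).mul (contOn_comp_re hgc))).pow 2
  · exact (((continuousOn_const.mul (contOn_comp_im hfc)).sub (contOn_comp_im hEc)).sub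
      ((continuousOn_const.mul hcot).mul (contOn_comp_im hgc))).pow 2
  · exact (((contOn_comp_re hDc).sub ((continuousOn_const.mul hcot).mul (contOn_comp_re hfc))).sub
      (continuousOn_const.mul (contOn_comp_re hgc))).pow 2
  · exact (((contOn_comp_im hDc).sub ((continuousOn_const.mul hcot).mul (contOn_comp_im hfc))).sub
      (continuousOn_const.mul (contOn_comp_im hgc))).pow 2

lemma contOn_pairvW {ω K : ℝ} (hωπ : ω < π) {f g D E : ℝ → ℂ}
    (hfc : ContinuousOn f (Ioc 0 ω)) (hgc : ContinuousOn g (Ioc 0 ω))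
    (hDc : ContinuousOn D (Ioc 0 ω)) (hEc : ContinuousOn E (Ioc 0 ω)) :
    ContinuousOn (pairvW K f g D E) (Ioc 0 ω) := by
  have hcot : ContinuousOn cotA (Ioc 0 ω) :=
    Real.continuous_cos.continuousOn.div Real.continuous_sin.continuousOn
      (fun t ht => (Real.sin_pos_of_pos_of_lt_pi ht.1 (lt_of_le_of_lt ht.2 hωπ)).ne')
  unfold pairvW
  apply ContinuousOn.mul continuousOn_const
  apply ContinuousOn.sub
  apply ContinuousOn.add
  · exact ((continuousOn_const.add (hcot.pow 2)).neg).mul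
      ((contOn_bilin hgc hgc).sub (contOn_bilin hfc hfc))
  · exact hcot.mul ((continuousOn_const.mul (contOn_bilin hgc hEc)).sub
      (continuousOn_const.mul (contOn_bilin hfc hDc)))
  · exact continuousOn_const.mul ((contOn_bilin hDc hgc).add (contOn_bilin hfc hEc))

lemma contOn_pairV {ω K : ℝ} (hωπ : ω < π) {f g : ℝ → ℂ}
    (hfc : ContinuousOn f (Ioc 0 ω)) (hgc : ContinuousOn g (Ioc 0 ω)) :
    ContinuousOn (pairV K f g) (Ioc 0 ω) := by
  have hcot : ContinuousOn cotA (Ioc 0 ω) :=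
    Real.continuous_cos.continuousOn.div Real.continuous_sin.continuousOn
      (fun t ht => (Real.sin_pos_of_pos_of_lt_pi ht.1 (lt_of_le_of_lt ht.2 hωπ)).ne')
  unfold pairV
  apply ContinuousOn.mul continuousOn_const
  exact (hcot.mul ((contOn_bilin hgc hgc).sub (contOn_bilin hfc hfc))).sub
    (continuousOn_const.mul (contOn_bilin hfc hgc))

lemma pair_bound (ω : ℝ) (hω0 : 0 < ω) (hωπ : ω < π) (k : ℤ) (K : ℝ)
    (hKk : (k:ℝ) + 1/2 = K) (hK1 : 3/4 ≤ K^2 - K) (hK2 : 3/4 ≤ K^2 + K)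
    (f g : ℝ → ℂ) (hf : ContDiffOn ℝ (⊤ : ℕ∞) f (Ioc 0 ω)) (hg : ContDiffOn ℝ (⊤ : ℕ∞) g (Ioc 0 ω))
    (hfs : tsupport f ⊆ Ioc 0 ω) (hgs : tsupport g ⊆ Ioc 0 ω) :
    IntegrableOn (pairPhi k f g) (Ioo 0 ω) volume ∧
    IntegrableOn (pairN f g) (Ioo 0 ω) volume ∧
    (3/4) * (∫ θ in Ioo 0 ω, pairN f g θ) + pairV K f g ω
      ≤ ∫ θ in Ioo 0 ω, pairPhi k f g θ := by
  obtain ⟨ε₁, hε₁, hf0⟩ := eps_of_tsupport hfs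
  obtain ⟨ε₂, hε₂, hg0⟩ := eps_of_tsupport hgs
  set ε := min (min ε₁ ε₂) ω with hεdef
  have hε : 0 < ε := lt_min (lt_min hε₁ hε₂) hω0
  have hεω : ε ≤ ω := min_le_right _ _
  have hf0' : ∀ x < ε, f x = 0 := fun x hx =>
    hf0 x (lt_of_lt_of_le hx (le_trans (min_le_left _ _) (min_le_left _ _)))
  have hg0' : ∀ x < ε, g x = 0 := fun x hx =>
    hg0 x (lt_of_lt_of_le hx (le_trans (min_le_left _ _) (min_le_right _ _)))
  have hsin : ∀ t ∈ Ioc 0 ω, 0 < Real.sin t := fun t ht =>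
    Real.sin_pos_of_pos_of_lt_pi ht.1 (lt_of_le_of_lt ht.2 hωπ)
  have hmem : ∀ θ ∈ Ioo 0 ω, Ioc 0 ω ∈ nhds θ := fun θ hθ => Ioc_mem_nhds hθ.1 hθ.2
  have hfd : ∀ θ ∈ Ioo 0 ω, HasDerivAt f (deriv f θ) θ := fun θ hθ =>
    ((hf.contDiffAt (hmem θ hθ)).differentiableAt (by simp)).hasDerivAt
  have hgd : ∀ θ ∈ Ioo 0 ω, HasDerivAt g (deriv g θ) θ := fun θ hθ =>
    ((hg.contDiffAt (hmem θ hθ)).differentiableAt (by simp)).hasDerivAt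
  set D := derivWithin f (Ioc 0 ω) with hD
  set E := derivWithin g (Ioc 0 ω) with hE
  have hDc : ContinuousOn D (Ioc 0 ω) :=
    hf.continuousOn_derivWithin (uniqueDiffOn_Ioc 0 ω) (by simp)
  have hEc : ContinuousOn E (Ioc 0 ω) :=
    hg.continuousOn_derivWithin (uniqueDiffOn_Ioc 0 ω) (by simp)
  have hDeq : ∀ θ ∈ Ioo 0 ω, D θ = deriv f θ := fun θ hθ =>
    derivWithin_of_mem_nhds (hmem θ hθ)
  have hEeq : ∀ θ ∈ Ioo 0 ω, E θ = deriv g θ := fun θ hθ =>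
    derivWithin_of_mem_nhds (hmem θ hθ)
  have hder0 : ∀ (h : ℝ → ℂ), (∀ x < ε, h x = 0) → ∀ x ∈ Ioo 0 ε, deriv h x = 0 := by
    intro h h0 x hx
    have heq : h =ᶠ[nhds x] (fun _ => (0:ℂ)) := by
      filter_upwards [Iio_mem_nhds hx.2] with y hy using h0 y hy
    rw [heq.deriv_eq, deriv_const']
  have hxIoo : ∀ x ∈ Ioo 0 ε, x ∈ Ioo 0 ω := fun x hx => ⟨hx.1, lt_of_lt_of_le hx.2 hεω⟩
  have hD0 : ∀ x ∈ Ioo 0 ε, D x = 0 := fun x hx => by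
    rw [hDeq x (hxIoo x hx)]; exact hder0 f hf0' x hx
  have hE0 : ∀ x ∈ Ioo 0 ε, E x = 0 := fun x hx => by
    rw [hEeq x (hxIoo x hx)]; exact hder0 g hg0' x hx
  have hfc : ContinuousOn f (Ioc 0 ω) := hf.continuousOn
  have hgc : ContinuousOn g (Ioc 0 ω) := hg.continuousOn
  -- integrability of pairPhi
  have hPhiW0 : ∀ x ∈ Ioo 0 ε, pairPhiW K f g D E x = 0 := by
    intro x hx
    simp [pairPhiW, hf0' x hx.2, hg0' x hx.2, hD0 x hx, hE0 x hx]
  have hPhiWint : IntegrableOn (pairPhiW K f g D E) (Ioo 0 ω) :=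
    integrableOn_aux hε hεω (contOn_pairPhiW hωπ hfc hgc hDc hEc) hPhiW0
  have hPhiEq : EqOn (pairPhi k f g) (pairPhiW K f g D E) (Ioo 0 ω) := by
    intro θ hθ
    rw [pairPhi_eq k K hKk f g θ]
    unfold pairPhiW
    rw [hDeq θ hθ, hEeq θ hθ]
  have hPhiInt : IntegrableOn (pairPhi k f g) (Ioo 0 ω) :=
    (integrableOn_congr_fun hPhiEq measurableSet_Ioo).mpr hPhiWint
  -- integrability of pairN
  have hNint : IntegrableOn (pairN f g) (Ioo 0 ω) := by
    apply integrableOn_aux hε hεω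
    · exact (hfc.norm.pow 2).add (hgc.norm.pow 2)
    · intro x hx; simp [pairN, hf0' x hx.2, hg0' x hx.2]
  -- integrability of pairv
  have hvW0 : ∀ x ∈ Ioo 0 ε, pairvW K f g D E x = 0 := by
    intro x hx
    simp [pairvW, bilinA, hf0' x hx.2, hg0' x hx.2, hD0 x hx, hE0 x hx]
  have hvWint : IntegrableOn (pairvW K f g D E) (Ioo 0 ω) :=
    integrableOn_aux hε hεω (contOn_pairvW hωπ hfc hgc hDc hEc) hvW0
  have hvEq : EqOn (pairv K f g) (pairvW K f g D E) (Ioo 0 ω) := by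
    intro θ hθ
    rw [pairv_eq_W]
    unfold pairvW
    rw [hDeq θ hθ, hEeq θ hθ]
  have hvInt : IntegrableOn (pairv K f g) (Ioo 0 ω) :=
    (integrableOn_congr_fun hvEq measurableSet_Ioo).mpr hvWint
  -- FTC
  have hV0 : ∀ x < ε, pairV K f g x = 0 := by
    intro x hx; simp [pairV, bilinA, hf0' x hx, hg0' x hx]
  have hVcont : ContinuousOn (pairV K f g) (Icc 0 ω) :=
    contOn_Icc_aux hε (contOn_pairV hωπ hfc hgc) hV0
  have hVd : ∀ x ∈ Ioo 0 ω, HasDerivWithinAt (pairV K f g) (pairv K f g x) (Ioi x) x :=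
    fun x hx => (hasDerivAt_pairV ((hsin x ⟨hx.1, hx.2.le⟩).ne') (hfd x hx) (hgd x hx)).hasDerivWithinAt
  have hII : IntervalIntegrable (pairv K f g) volume 0 ω :=
    (intervalIntegrable_iff_integrableOn_Ioo_of_le hω0.le).mpr hvInt
  have hFTC0 := intervalIntegral.integral_eq_sub_of_hasDeriv_right_of_le hω0.le hVcont hVd hII
  have hFTC : ∫ θ in Ioo 0 ω, pairv K f g θ = pairV K f g ω := by
    rw [← integral_Ioc_eq_integral_Ioo, ← intervalIntegral.integral_of_le hω0.le, hFTC0,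
      hV0 0 hε, sub_zero]
  -- monotonicity
  have hmono : ∫ θ in Ioo 0 ω, ((3/4) * pairN f g θ + pairv K f g θ)
      ≤ ∫ θ in Ioo 0 ω, pairPhi k f g θ :=
    setIntegral_mono_on ((hNint.const_mul _).add hvInt) hPhiInt measurableSet_Ioo
      (fun θ _ => pointwise_ineq k K hKk hK1 hK2 f g θ)
  rw [integral_add (hNint.const_mul _) hvInt, MeasureTheory.integral_const_mul, hFTC] at hmono
  exact ⟨hPhiInt, hNint, hmono⟩

lemma boundary_cancel (K ω : ℝ) (hs : Real.sin ω ≠ 0) (p3 p4 : ℂ)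
    (h1 h2 : ℂ)
    (e1 : h1 = Complex.I * (Real.sin ω : ℂ) * p3 - Complex.I * (Real.cos ω : ℂ) * p4)
    (e2 : h2 = -Complex.I * (Real.cos ω : ℂ) * p3 - Complex.I * (Real.sin ω : ℂ) * p4) :
    K * (cotA ω * (bilinA h2 h2 - bilinA h1 h1) - 2 * bilinA h1 h2)
    + K * (cotA ω * (bilinA p4 p4 - bilinA p3 p3) - 2 * bilinA p3 p4) = 0 := by
  subst e1 e2
  unfold cotA bilinA
  simp only [Complex.mul_re, Complex.mul_im, Complex.sub_re, Complex.sub_im,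
    Complex.neg_re, Complex.neg_im, Complex.I_re, Complex.I_im,
    Complex.ofReal_re, Complex.ofReal_im]
  field_simp
  linear_combination (K*(Real.cos ω*(p3.re^2+p3.im^2-p4.re^2-p4.im^2)
    + 2*Real.sin ω*(p3.re*p4.re+p3.im*p4.im))) * Real.sin_sq_add_cos_sq ω

/-- Improved lower bound far from the critical angular momenta (Remark 4.7): for `ω ∈ (0,π)`,
`k ≤ −2` or `k ≥ 1`, and every `ψ ∈ M`, `‖(T_k − 1/2)ψ‖² ≥ (3/4) ‖ψ‖²`. -/
theorem improved_lower_bound (ω : ℝ) (hω : ω ∈ Ioo 0 π) (k : ℤ)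
    (hk : k ≤ -2 ∨ 1 ≤ k)
    (ψ₁ ψ₂ ψ₃ ψ₄ : ℝ → ℂ) (hψ : InCore ω ψ₁ ψ₂ ψ₃ ψ₄) :
    (∫ θ in Ioo 0 ω,
        (‖tauFst k ψ₁ ψ₂ θ - (1 / 2) * ψ₁ θ‖ ^ 2
          + ‖tauSnd k ψ₁ ψ₂ θ - (1 / 2) * ψ₂ θ‖ ^ 2
          + ‖tauFst k ψ₃ ψ₄ θ - (1 / 2) * ψ₃ θ‖ ^ 2
          + ‖tauSnd k ψ₃ ψ₄ θ - (1 / 2) * ψ₄ θ‖ ^ 2)) ≥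
      (3 / 4) * (∫ θ in Ioo 0 ω,
        (‖ψ₁ θ‖ ^ 2 + ‖ψ₂ θ‖ ^ 2 + ‖ψ₃ θ‖ ^ 2 + ‖ψ₄ θ‖ ^ 2)) := by
  obtain ⟨hω0, hωπ⟩ := hω
  obtain ⟨h1, h2, h3, h4, _, hsp1, _, hsp2, _, hsp3, _, hsp4, hb1, hb2⟩ := hψ
  set K : ℝ := (k:ℝ) + 1/2 with hKdef
  have hKk : (k:ℝ) + 1/2 = K := rfl
  have hK1 : 3/4 ≤ K^2 - K := by
    rcases hk with h | h
    · have hkr : (k:ℝ) ≤ -2 := by exact_mod_cast h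
      nlinarith
    · have hkr : (1:ℝ) ≤ (k:ℝ) := by exact_mod_cast h
      nlinarith
  have hK2 : 3/4 ≤ K^2 + K := by
    rcases hk with h | h
    · have hkr : (k:ℝ) ≤ -2 := by exact_mod_cast h
      nlinarith
    · have hkr : (1:ℝ) ≤ (k:ℝ) := by exact_mod_cast h
      nlinarith
  obtain ⟨hP1i, hN1i, hP1⟩ := pair_bound ω hω0 hωπ k K hKk hK1 hK2 ψ₁ ψ₂ h1 h2 hsp1 hsp2
  obtain ⟨hP2i, hN2i, hP2⟩ := pair_bound ω hω0 hωπ k K hKk hK1 hK2 ψ₃ ψ₄ h3 h4 hsp3 hsp4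
  have hsne : Real.sin ω ≠ 0 := (Real.sin_pos_of_pos_of_lt_pi hω0 hωπ).ne'
  have hB : pairV K ψ₁ ψ₂ ω + pairV K ψ₃ ψ₄ ω = 0 := by
    unfold pairV
    exact boundary_cancel K ω hsne (ψ₃ ω) (ψ₄ ω) (ψ₁ ω) (ψ₂ ω) hb1 hb2
  have hLHS : (∫ θ in Ioo 0 ω,
        (‖tauFst k ψ₁ ψ₂ θ - (1 / 2) * ψ₁ θ‖ ^ 2
          + ‖tauSnd k ψ₁ ψ₂ θ - (1 / 2) * ψ₂ θ‖ ^ 2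
          + ‖tauFst k ψ₃ ψ₄ θ - (1 / 2) * ψ₃ θ‖ ^ 2
          + ‖tauSnd k ψ₃ ψ₄ θ - (1 / 2) * ψ₄ θ‖ ^ 2))
      = (∫ θ in Ioo 0 ω, pairPhi k ψ₁ ψ₂ θ) + (∫ θ in Ioo 0 ω, pairPhi k ψ₃ ψ₄ θ) := by
    rw [← MeasureTheory.integral_add hP1i hP2i]
    exact integral_congr_ae (Filter.Eventually.of_forall (fun θ => by
      simp only [pairPhi]; ring))
  have hRHS : (∫ θ in Ioo 0 ω,
        (‖ψ₁ θ‖ ^ 2 + ‖ψ₂ θ‖ ^ 2 + ‖ψ₃ θ‖ ^ 2 + ‖ψ₄ θ‖ ^ 2))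
      = (∫ θ in Ioo 0 ω, pairN ψ₁ ψ₂ θ) + (∫ θ in Ioo 0 ω, pairN ψ₃ ψ₄ θ) := by
    rw [← MeasureTheory.integral_add hN1i hN2i]
    exact integral_congr_ae (Filter.Eventually.of_forall (fun θ => by
      simp only [pairN]; ring))
  rw [ge_iff_le, hLHS, hRHS]
  linarith

end
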